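/- arXiv:2605.30691 — 2 statements merged into one kernel-verified Lean document; each statement's English description precedes it below -/
import Mathlib

section
/- Let λ ∈ ℂ with λ ≠ 0, let k₁ ≤ k₂ be integers with k₁ ≥ 1, and let i₁ < i₂ < ⋯ < i_m be integers with k₂ − k₁ + 1 ≥ i_m − i₁ + 1. Then the (k₂−k₁+1) × m complex matrix M with entries M_{a,j} = (k₂ − a + 1)^{i_j} · λ^{k₂ − a + 1} for 1 ≤ a ≤ k₂−k₁+1 and 1 ≤ j ≤ m has full column rank, i.e., its columns are linearly independent over ℂ. -/
open Matrix Filter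

/-- Euclidean norm of a vector. -/
noncomputable def vecEnorm {ι : Type*} [Fintype ι] (v : ι → ℝ) : ℝ :=
  Real.sqrt (∑ i, v i ^ 2)

/-- Largest singular value: maximum Euclidean gain over unit vectors. -/
noncomputable def sigmaMax {ι κ : Type*} [Fintype ι] [Fintype κ]
    (M : Matrix ι κ ℝ) : ℝ :=
  sSup {y | ∃ x : κ → ℝ, vecEnorm x = 1 ∧ y = vecEnorm (M.mulVec x)}

/-- Smallest gain: minimum Euclidean gain over unit vectors. -/
noncomputable def sigmaMin {ι κ : Type*} [Fintype ι] [Fintype κ]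
    (M : Matrix ι κ ℝ) : ℝ :=
  sInf {y | ∃ x : κ → ℝ, vecEnorm x = 1 ∧ y = vecEnorm (M.mulVec x)}

/-- `P` is the Moore–Penrose pseudoinverse of `A`. -/
def IsMPInv {ι κ : Type*} [Fintype ι] [Fintype κ]
    (A : Matrix ι κ ℝ) (P : Matrix κ ι ℝ) : Prop :=
  A * P * A = A ∧ P * A * P = P ∧ (A * P)ᵀ = A * P ∧ (P * A)ᵀ = P * A

/-- Block-Toeplitz matrix `T_j^{l,w}(g)`: the (a,b) block (1-indexed) is
`g (j + l - a + b - 1)`. -/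
def Tblk {q m : ℕ} (g : ℕ → Matrix (Fin q) (Fin m) ℝ) (j l w : ℕ) :
    Matrix (Fin l × Fin q) (Fin w × Fin m) ℝ :=
  Matrix.of fun a b => g (j + l + (b.1 : ℕ) - ((a.1 : ℕ) + 1)) a.2 b.2

/-- Block upper-triangular Toeplitz matrix `T_p(g)`: the (a,b) block is `g (b - a)`
for `b ≥ a` and `0` otherwise. -/
def Ttri {q m : ℕ} (g : ℕ → Matrix (Fin q) (Fin m) ℝ) (p : ℕ) :
    Matrix (Fin p × Fin q) (Fin p × Fin m) ℝ :=
  Matrix.of fun a b =>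
    if (a.1 : ℕ) ≤ (b.1 : ℕ) then g ((b.1 : ℕ) - (a.1 : ℕ)) a.2 b.2 else 0

/-- the matrix with entries `(k₂ − a + 1)^{i_j} λ^{k₂ − a + 1}`
(rows `a = 1, …, k₂−k₁+1`, columns `j`), with sorted integer exponents `i_j` and
`k₂ − k₁ + 1 ≥ i_m − i₁ + 1`, has linearly independent columns over ℂ. -/
theorem stmt11 (lam : ℂ) (hlam : lam ≠ 0) (k₁ k₂ : ℤ) (hk₁ : 1 ≤ k₁) (hk : k₁ ≤ k₂)
    (m : ℕ) (i : Fin (m + 1) → ℤ) (hmono : StrictMono i)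
    (hcond : i (Fin.last m) - i 0 + 1 ≤ k₂ - k₁ + 1) :
    LinearIndependent ℂ
      (fun (j : Fin (m + 1)) => fun (a : Fin ((k₂ - k₁).toNat + 1)) =>
        ((k₂ - (a : ℕ) : ℤ) : ℂ) ^ (i j) * lam ^ (k₂ - (a : ℕ))) := by
  classical
  rw [Fintype.linearIndependent_iff]
  intro c hc
  have hnn : ∀ j, 0 ≤ i j - i 0 := fun j => sub_nonneg.2 (hmono.monotone (Fin.zero_le j))
  set e : Fin (m+1) → ℕ := fun j => (i j - i 0).toNat with he
  have hie : ∀ j, i j = i 0 + (e j : ℤ) := by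
    intro j; simp [he, Int.toNat_of_nonneg (hnn j)]
  have heinj : Function.Injective e := by
    intro a b hab
    have h1 : i a - i 0 = i b - i 0 := by
      rw [← Int.toNat_of_nonneg (hnn a), ← Int.toNat_of_nonneg (hnn b)]
      exact_mod_cast hab
    exact hmono.injective (by linarith)
  set p : Polynomial ℂ := ∑ j, Polynomial.C (c j) * Polynomial.X ^ (e j) with hp
  -- evaluation points, all ≥ k₁ ≥ 1
  have hge : ∀ a : Fin ((k₂ - k₁).toNat + 1), k₁ ≤ k₂ - (a : ℕ) := by
    intro a; have := a.isLt; omega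
  have hn0 : ∀ a : Fin ((k₂ - k₁).toNat + 1), ((k₂ - (a : ℕ) : ℤ) : ℂ) ≠ 0 := by
    intro a
    have := hge a
    exact_mod_cast (by omega : (k₂ - (a : ℕ) : ℤ) ≠ 0)
  have heval : ∀ a : Fin ((k₂ - k₁).toNat + 1),
      p.eval ((k₂ - (a : ℕ) : ℤ) : ℂ) = 0 := by
    intro a
    set n : ℂ := ((k₂ - (a : ℕ) : ℤ) : ℂ) with hnd
    have hrow := congrFun hc a
    simp only [Finset.sum_apply, Pi.smul_apply, smul_eq_mul, Pi.zero_apply] at hrow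
    have hrow' : (n ^ (i 0) * lam ^ (k₂ - (a : ℕ))) * p.eval n = 0 := by
      rw [hp]
      rw [Polynomial.eval_finset_sum]
      rw [Finset.mul_sum]
      rw [← hrow]
      apply Finset.sum_congr rfl
      intro j _
      simp only [Polynomial.eval_mul, Polynomial.eval_C, Polynomial.eval_pow,
        Polynomial.eval_X]
      rw [hie j, zpow_add₀ (hn0 a), zpow_natCast]
      ring
    have h1 : n ^ (i 0) ≠ 0 := zpow_ne_zero _ (hn0 a)
    have h2 : lam ^ (k₂ - (a : ℕ)) ≠ 0 := zpow_ne_zero _ hlam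
    rcases mul_eq_zero.1 hrow' with h | h
    · exact absurd h (mul_ne_zero h1 h2)
    · exact h
  -- injectivity of evaluation points
  have hfinj : Function.Injective
      (fun a : Fin ((k₂ - k₁).toNat + 1) => ((k₂ - (a : ℕ) : ℤ) : ℂ)) := by
    intro a b hab
    dsimp only at hab
    have : (k₂ - (a : ℕ) : ℤ) = (k₂ - (b : ℕ) : ℤ) := by exact_mod_cast hab
    have : (a : ℕ) = (b : ℕ) := by omega
    exact Fin.ext this
  -- degree bound
  have hdeg : p.natDegree < Fintype.card (Fin ((k₂ - k₁).toNat + 1)) := by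
    rw [Fintype.card_fin]
    have hle : p.natDegree ≤ (k₂ - k₁).toNat := by
      rw [hp]
      refine le_trans (Polynomial.natDegree_sum_le _ _) ?_
      rw [Finset.fold_max_le]
      refine ⟨Nat.zero_le _, fun j _ => ?_⟩
      refine le_trans (Polynomial.natDegree_C_mul_le _ _) ?_
      refine le_trans (Polynomial.natDegree_X_pow_le _) ?_
      have h1 : i j ≤ i (Fin.last m) := hmono.monotone (Fin.le_last j)
      simp only [he]
      omega
    omega
  have hp0 : p = 0 :=
    Polynomial.eq_zero_of_natDegree_lt_card_of_eval_eq_zero p hfinj heval hdeg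
  intro j
  have hcoeff := congrArg (fun q => Polynomial.coeff q (e j)) hp0
  simp only [hp, Polynomial.finset_sum_coeff, Polynomial.coeff_C_mul,
    Polynomial.coeff_X_pow, Polynomial.coeff_zero, mul_ite, mul_one, mul_zero] at hcoeff
  rwa [Finset.sum_eq_single j (fun b _ hb => if_neg (fun h => hb (heinj h).symm)) (fun h => absurd (Finset.mem_univ j) h),
    if_pos rfl] at hcoeff
end

section
/- Let g_k ∈ ℝ^{q×m} and g̃_k ∈ ℝ^{q_m×m} (k ≥ 0) be matrix sequences, p, p_f, r ≥ 1, and let u_{−p+1}, …, u_{p_f} ∈ ℝ^m be fixed inputs with stacks U_p = (u_0ᵀ, …, u_{−p+1}ᵀ)ᵀ and U_f = (u_{p_f}ᵀ, …, u_1ᵀ)ᵀ. Let φ : ℝˢ → ℝ^q, φ̃ : ℝˢ → ℝ^{q_m}, f : ℝ^m → ℝˢ, and define Φ_p(x) ∈ ℝ^{q_m p} as the stack whose j-th block (j = 1, …, p, top to bottom) is φ̃(x − Σ_{i=2−j}^{0} f(u_i)) (empty sum for j = 1), and Φ_f(x) ∈ ℝ^{q p_f} as the stack whose j-th block (j = 1,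 …, p_f, top to bottom) is φ(x + Σ_{i=1}^{p_f−j+1} f(u_i)). Fix x₀, x̂₀ ∈ ℝˢ and U^e, Û^e ∈ ℝ^{mr}, and set Ỹ_p = T_p(g̃)U_p + T_1^{p,r}(g̃)U^e + Φ_p(x₀), Y_f = T_{p_f}(g)U_f + T_1^{p_f,p}(g)U_p + T_{p+1}^{p_f,r}(g)U^e + Φ_f(x₀), Ŷ̃_p = T_p(g̃)U_p + T_1^{p,r}(g̃)Û^e + Φ_p(x̂₀), Ŷ_f = T_{p_f}(g)U_f + T_1^{p_f,p}(g)U_p + T_{p+1}^{p_f,r}(g)Û^e + Φ_f(x̂₀). Suppose Ψ_p : ℝˢ → ℝ^{q_m p × s} and Ψ_f : ℝˢ → ℝ^{q p_f × s} satisfy Φ_p(x) − Φ_p(x₀) = Ψ_p(x)(x − x₀) and Φ_f(x) − Φ_f(x₀) = Ψ_f(x)(x − x₀) for all x ∈ ℝˢ, and let L₁, L₂, α be reals with σ_max(Ψ_p(x)) ≤ L₁, σ_max(Ψ_f(x)) ≤ L₂, and σ_min((I − T_1^{p,r}(g̃)·P)·Ψ_p(x)) ≥ α > 0 for all x ∈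 ℝˢ, where P is the Moore–Penrose pseudoinverse of T_1^{p,r}(g̃). If the null space of T_1^{p,r}(g̃) is contained in the null space of T_{p+1}^{p_f,r}(g), then ‖Ŷ_f − Y_f‖ ≤ ((1 + L₁/α)·σ_max(T_{p+1}^{p_f,r}(g)·P) + L₂/α)·‖Ŷ̃_p − Ỹ_p‖. -/
open Matrix Filter

section helpers
variable {ι κ : Type*} [Fintype ι] [Fintype κ]

lemma vecEnorm_eq_norm (v : ι → ℝ) :
    vecEnorm v = ‖(WithLp.equiv 2 (ι → ℝ)).symm v‖ := by
  rw [EuclideanSpace.norm_eq]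
  simp [vecEnorm, Real.norm_eq_abs, sq_abs]

lemma vecEnorm_nonneg' (v : ι → ℝ) : 0 ≤ vecEnorm v := Real.sqrt_nonneg _

lemma vecEnorm_smul (c : ℝ) (v : ι → ℝ) : vecEnorm (c • v) = |c| * vecEnorm v := by
  rw [vecEnorm_eq_norm, vecEnorm_eq_norm v]
  have : (WithLp.equiv 2 (ι → ℝ)).symm (c • v) = c • (WithLp.equiv 2 (ι → ℝ)).symm v := rfl
  rw [this, norm_smul, Real.norm_eq_abs]

lemma vecEnorm_zero_iff {v : ι → ℝ} : vecEnorm v = 0 ↔ v = 0 := by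
  constructor
  · intro h
    have h1 : ∑ i, v i ^ 2 ≤ 0 := Real.sqrt_eq_zero'.mp h
    have h2 : ∑ i, v i ^ 2 = 0 :=
      le_antisymm h1 (Finset.sum_nonneg fun i _ => sq_nonneg _)
    funext i
    have := (Finset.sum_eq_zero_iff_of_nonneg fun i _ => sq_nonneg (v i)).mp h2 i (Finset.mem_univ i)
    exact (pow_eq_zero_iff two_ne_zero).mp this
  · rintro rfl; simp [vecEnorm]

lemma vecEnorm_add_le (a b : ι → ℝ) : vecEnorm (a + b) ≤ vecEnorm a + vecEnorm b := by
  rw [vecEnorm_eq_norm, vecEnorm_eq_norm, vecEnorm_eq_norm]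
  exact norm_add_le _ _

lemma vecEnorm_neg (a : ι → ℝ) : vecEnorm (-a) = vecEnorm a := by
  simp [vecEnorm]

lemma vecEnorm_sub_le (a b : ι → ℝ) : vecEnorm (a - b) ≤ vecEnorm a + vecEnorm b := by
  rw [sub_eq_add_neg]
  simpa [vecEnorm_neg] using vecEnorm_add_le a (-b)

lemma sigmaMax_bddAbove [DecidableEq κ] (M : Matrix ι κ ℝ) :
    BddAbove {y | ∃ x : κ → ℝ, vecEnorm x = 1 ∧ y = vecEnorm (M.mulVec x)} := by
  refine ⟨‖(LinearMap.toContinuousLinearMap (Matrix.toEuclideanLin M))‖, ?_⟩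
  rintro y ⟨x, hx, rfl⟩
  have h := (LinearMap.toContinuousLinearMap (Matrix.toEuclideanLin M)).le_opNorm
    ((WithLp.equiv 2 (κ → ℝ)).symm x)
  rw [vecEnorm_eq_norm] at hx
  rw [vecEnorm_eq_norm]
  rw [hx, mul_one] at h
  simpa [Matrix.toEuclideanLin_apply_piLp_toLp] using h

lemma sigmaMax_nonneg (M : Matrix ι κ ℝ) : 0 ≤ sigmaMax M :=
  Real.sSup_nonneg (by rintro y ⟨x, hx, rfl⟩; exact vecEnorm_nonneg' _)

lemma vecEnorm_mulVec_le [DecidableEq κ] (M : Matrix ι κ ℝ) (x : κ → ℝ) :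
    vecEnorm (M.mulVec x) ≤ sigmaMax M * vecEnorm x := by
  rcases eq_or_ne (vecEnorm x) 0 with h | h
  · have hx : x = 0 := vecEnorm_zero_iff.mp h
    subst hx
    simp [h, Matrix.mulVec_zero, vecEnorm_zero_iff.mpr rfl, vecEnorm]
  · have hpos : 0 < vecEnorm x := lt_of_le_of_ne (vecEnorm_nonneg' x) (Ne.symm h)
    set c := (vecEnorm x)⁻¹ with hc
    have hcpos : 0 < c := inv_pos.mpr hpos
    have hunit : vecEnorm (c • x) = 1 := by
      rw [vecEnorm_smul, abs_of_pos hcpos, hc]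
      exact inv_mul_cancel₀ h
    have hle := le_csSup (sigmaMax_bddAbove M) ⟨c • x, hunit, rfl⟩
    have heq : vecEnorm (M.mulVec (c • x)) = c * vecEnorm (M.mulVec x) := by
      rw [Matrix.mulVec_smul, vecEnorm_smul, abs_of_pos hcpos]
    rw [heq] at hle
    have := mul_le_mul_of_nonneg_left hle (le_of_lt hpos)
    calc vecEnorm (M.mulVec x) = vecEnorm x * (c * vecEnorm (M.mulVec x)) := by
          rw [hc, ← mul_assoc, mul_inv_cancel₀ h, one_mul]
      _ ≤ vecEnorm x * sigmaMax M := this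
      _ = sigmaMax M * vecEnorm x := mul_comm _ _

lemma vecEnorm_mulVec_ge {α : ℝ} (M : Matrix ι κ ℝ) (h : α ≤ sigmaMin M) (x : κ → ℝ) :
    α * vecEnorm x ≤ vecEnorm (M.mulVec x) := by
  rcases eq_or_ne (vecEnorm x) 0 with h0 | h0
  · rw [h0, mul_zero]; exact vecEnorm_nonneg' _
  · have hpos : 0 < vecEnorm x := lt_of_le_of_ne (vecEnorm_nonneg' x) (Ne.symm h0)
    set c := (vecEnorm x)⁻¹ with hc
    have hcpos : 0 < c := inv_pos.mpr hpos
    have hunit : vecEnorm (c • x) = 1 := by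
      rw [vecEnorm_smul, abs_of_pos hcpos, hc]
      exact inv_mul_cancel₀ h0
    have hbdd : BddBelow {y | ∃ x : κ → ℝ, vecEnorm x = 1 ∧ y = vecEnorm (M.mulVec x)} :=
      ⟨0, by rintro y ⟨x, hx, rfl⟩; exact vecEnorm_nonneg' _⟩
    have hle := csInf_le hbdd ⟨c • x, hunit, rfl⟩
    have heq : vecEnorm (M.mulVec (c • x)) = c * vecEnorm (M.mulVec x) := by
      rw [Matrix.mulVec_smul, vecEnorm_smul, abs_of_pos hcpos]
    have h2 : α ≤ c * vecEnorm (M.mulVec x) := le_trans (le_trans h hle) (le_of_eq heq)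
    have := mul_le_mul_of_nonneg_left h2 (le_of_lt hpos)
    calc α * vecEnorm x = vecEnorm x * α := mul_comm _ _
      _ ≤ vecEnorm x * (c * vecEnorm (M.mulVec x)) := this
      _ = vecEnorm (M.mulVec x) := by rw [hc, ← mul_assoc, mul_inv_cancel₀ h0, one_mul]

lemma vecEnorm_proj_le [DecidableEq ι] (Q : Matrix ι ι ℝ) (hQ2 : Q * Q = Q) (hQt : Qᵀ = Q) (v : ι → ℝ) :
    vecEnorm ((1 - Q).mulVec v) ≤ vecEnorm v := by
  set a := (1 - Q).mulVec v with ha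
  set b := Q.mulVec v with hb
  have hab : a + b = v := by
    rw [ha, hb, ← Matrix.add_mulVec, sub_add_cancel, Matrix.one_mulVec]
  have hdot : ∑ i, a i * b i = 0 := by
    have h1 : a ⬝ᵥ b = (a ᵥ* Q) ⬝ᵥ v := by rw [hb, Matrix.dotProduct_mulVec]
    have h2 : a ᵥ* Q = Qᵀ *ᵥ a := by rw [← Matrix.vecMul_transpose, transpose_transpose]
    have h3 : Qᵀ *ᵥ a = (Qᵀ * (1 - Q)) *ᵥ v := by rw [ha, Matrix.mulVec_mulVec]
    have h4 : Qᵀ * (1 - Q) = 0 := by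
      rw [hQt, Matrix.mul_sub, Matrix.mul_one, hQ2, sub_self]
    have : a ⬝ᵥ b = 0 := by rw [h1, h2, h3, h4]; simp
    simpa [dotProduct] using this
  unfold vecEnorm
  apply Real.sqrt_le_sqrt
  have hexp : ∑ i, v i ^ 2 = ∑ i, a i ^ 2 + 2 * ∑ i, a i * b i + ∑ i, b i ^ 2 := by
    rw [← hab]
    simp only [Pi.add_apply]
    rw [Finset.sum_congr rfl (fun i _ => add_sq (a i) (b i)),
      Finset.sum_add_distrib, Finset.sum_add_distrib, Finset.mul_sum]
    congr 1
    congr 1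
    apply Finset.sum_congr rfl
    intro i _
    ring
  have hbn : 0 ≤ ∑ i, b i ^ 2 := Finset.sum_nonneg fun i _ => sq_nonneg _
  rw [hexp, hdot]
  linarith

end helpers

/-- prediction-error bound for the nonlinear (IREM) model: with equilibrium
stacks `Φ_p, Φ_f`, factorizations `Ψ_p, Ψ_f`, bounds `L₁, L₂, α` and the null-space
inclusion, `‖Ŷ_f − Y_f‖ ≤ ((1 + L₁/α)σ_max(T_{p+1}^{p_f,r}(g)P) + L₂/α)‖Ŷ̃_p − Ỹ_p‖`. -/
theorem stmt14 {q m qm s : ℕ}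
    (g : ℕ → Matrix (Fin q) (Fin m) ℝ) (gt : ℕ → Matrix (Fin qm) (Fin m) ℝ)
    (p pf r : ℕ) (hp : 1 ≤ p) (hpf : 1 ≤ pf) (hr : 1 ≤ r)
    (u : ℤ → Fin m → ℝ)
    (Up : Fin p × Fin m → ℝ) (hUp : ∀ a, Up a = u (-((a.1 : ℕ) : ℤ)) a.2)
    (Uf : Fin pf × Fin m → ℝ) (hUf : ∀ a, Uf a = u ((pf : ℤ) - ((a.1 : ℕ) : ℤ)) a.2)
    (φ : (Fin s → ℝ) → (Fin q → ℝ)) (φt : (Fin s → ℝ) → (Fin qm → ℝ))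
    (f : (Fin m → ℝ) → (Fin s → ℝ))
    (Φp : (Fin s → ℝ) → (Fin p × Fin qm → ℝ))
    (hΦp : ∀ x a, Φp x a =
      φt (x - ∑ t ∈ Finset.range (a.1 : ℕ), f (u (-(t : ℤ)))) a.2)
    (Φf : (Fin s → ℝ) → (Fin pf × Fin q → ℝ))
    (hΦf : ∀ x a, Φf x a =
      φ (x + ∑ t ∈ Finset.range (pf - (a.1 : ℕ)), f (u ((t : ℤ) + 1))) a.2)
    (x₀ xh₀ : Fin s → ℝ) (Ue Ueh : Fin r × Fin m → ℝ)
    (Yp Yph : Fin p × Fin qm → ℝ) (Yf Yfh : Fin pf × Fin q → ℝ)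
    (hYp : Yp = (Ttri gt p).mulVec Up + (Tblk gt 1 p r).mulVec Ue + Φp x₀)
    (hYf : Yf = (Ttri g pf).mulVec Uf + (Tblk g 1 pf p).mulVec Up +
      (Tblk g (p + 1) pf r).mulVec Ue + Φf x₀)
    (hYph : Yph = (Ttri gt p).mulVec Up + (Tblk gt 1 p r).mulVec Ueh + Φp xh₀)
    (hYfh : Yfh = (Ttri g pf).mulVec Uf + (Tblk g 1 pf p).mulVec Up +
      (Tblk g (p + 1) pf r).mulVec Ueh + Φf xh₀)
    (Ψp : (Fin s → ℝ) → Matrix (Fin p × Fin qm) (Fin s) ℝ)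
    (Ψf : (Fin s → ℝ) → Matrix (Fin pf × Fin q) (Fin s) ℝ)
    (hΨp : ∀ x, Φp x - Φp x₀ = (Ψp x).mulVec (x - x₀))
    (hΨf : ∀ x, Φf x - Φf x₀ = (Ψf x).mulVec (x - x₀))
    (P : Matrix (Fin r × Fin m) (Fin p × Fin qm) ℝ)
    (hP : IsMPInv (Tblk gt 1 p r) P)
    (L₁ L₂ α : ℝ) (hα : 0 < α)
    (hL₁ : ∀ x, sigmaMax (Ψp x) ≤ L₁)
    (hL₂ : ∀ x, sigmaMax (Ψf x) ≤ L₂)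
    (hmin : ∀ x, α ≤ sigmaMin ((1 - Tblk gt 1 p r * P) * Ψp x))
    (hnull : ∀ v : Fin r × Fin m → ℝ, (Tblk gt 1 p r).mulVec v = 0 →
      (Tblk g (p + 1) pf r).mulVec v = 0) :
    vecEnorm (Yfh - Yf) ≤
      ((1 + L₁ / α) * sigmaMax (Tblk g (p + 1) pf r * P) + L₂ / α) *
        vecEnorm (Yph - Yp) := by

  set A := Tblk gt 1 p r with hA
  set B := Tblk g (p + 1) pf r with hB
  set δU := Ueh - Ue with hdU
  set δ := xh₀ - x₀ with hd
  set e := Yph - Yp with he'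
  -- step 1
  have he : e = A.mulVec δU + (Ψp xh₀).mulVec δ := by
    rw [he', hYph, hYp, hd, ← hΨp xh₀, hdU, Matrix.mulVec_sub]
    abel
  -- step 2
  have hout : Yfh - Yf = B.mulVec δU + (Ψf xh₀).mulVec δ := by
    rw [hYfh, hYf, hd, ← hΨf xh₀, hdU, Matrix.mulVec_sub]
    abel
  -- step 3 : B δU = (B*P) (A δU)
  have hBδU : B.mulVec δU = (B * P).mulVec (A.mulVec δU) := by
    have h0 : A.mulVec (δU - (P * A).mulVec δU) = 0 := by
      rw [Matrix.mulVec_sub, Matrix.mulVec_mulVec, ← Matrix.mul_assoc, hP.1, sub_self]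
    have h1 := hnull _ h0
    rw [Matrix.mulVec_sub, Matrix.mulVec_mulVec, sub_eq_zero] at h1
    rw [h1, Matrix.mulVec_mulVec, Matrix.mul_assoc]
  -- Q = A * P is a symmetric idempotent
  have hQ2 : (A * P) * (A * P) = A * P := by
    rw [← Matrix.mul_assoc, hP.1]
  have hQt : (A * P)ᵀ = A * P := hP.2.2.1
  -- (1 - A*P) e = (1 - A*P) (Ψp xh₀ δ)
  have hMe : (1 - A * P).mulVec e = (1 - A * P).mulVec ((Ψp xh₀).mulVec δ) := by
    rw [he, Matrix.mulVec_add]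
    have : (1 - A * P).mulVec (A.mulVec δU) = 0 := by
      rw [Matrix.mulVec_mulVec, Matrix.sub_mul, Matrix.one_mul, hP.1,
        sub_self, Matrix.zero_mulVec]
    rw [this, zero_add]
  -- bound on ‖δ‖
  have hδbound : α * vecEnorm δ ≤ vecEnorm e := by
    have h1 := vecEnorm_mulVec_ge ((1 - A * P) * Ψp xh₀) (hmin xh₀) δ
    rw [← Matrix.mulVec_mulVec, ← hMe] at h1
    exact h1.trans (vecEnorm_proj_le (A * P) hQ2 hQt e)
  have hδe : vecEnorm δ ≤ vecEnorm e / α := by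
    rw [le_div_iff₀ hα]
    linarith [hδbound]
  -- nonnegativity facts
  have hδn : 0 ≤ vecEnorm δ := vecEnorm_nonneg' δ
  have hen : 0 ≤ vecEnorm e := vecEnorm_nonneg' e
  have hL₁n : 0 ≤ L₁ := le_trans (sigmaMax_nonneg (Ψp x₀)) (hL₁ x₀)
  have hL₂n : 0 ≤ L₂ := le_trans (sigmaMax_nonneg (Ψf x₀)) (hL₂ x₀)
  set σ := sigmaMax (B * P) with hσ'
  have hσn : 0 ≤ σ := sigmaMax_nonneg _
  -- rewrite output
  have hout2 : Yfh - Yf =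
      ((B * P).mulVec e - (B * P).mulVec ((Ψp xh₀).mulVec δ)) + (Ψf xh₀).mulVec δ := by
    rw [hout, hBδU]
    have : A.mulVec δU = e - (Ψp xh₀).mulVec δ := by rw [he]; abel
    rw [this, Matrix.mulVec_sub]
  -- triangle inequality
  have htri : vecEnorm (Yfh - Yf) ≤
      vecEnorm ((B * P).mulVec e) + vecEnorm ((B * P).mulVec ((Ψp xh₀).mulVec δ)) +
        vecEnorm ((Ψf xh₀).mulVec δ) := by
    rw [hout2]
    calc vecEnorm (((B * P).mulVec e - (B * P).mulVec ((Ψp xh₀).mulVec δ)) + (Ψf xh₀).mulVec δ)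
        ≤ vecEnorm ((B * P).mulVec e - (B * P).mulVec ((Ψp xh₀).mulVec δ)) +
            vecEnorm ((Ψf xh₀).mulVec δ) := vecEnorm_add_le _ _
      _ ≤ vecEnorm ((B * P).mulVec e) + vecEnorm ((B * P).mulVec ((Ψp xh₀).mulVec δ)) +
            vecEnorm ((Ψf xh₀).mulVec δ) := by
          linarith [vecEnorm_sub_le ((B * P).mulVec e) ((B * P).mulVec ((Ψp xh₀).mulVec δ))]
  -- individual bounds
  have t1 : vecEnorm ((B * P).mulVec e) ≤ σ * vecEnorm e := vecEnorm_mulVec_le _ _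
  have t2 : vecEnorm ((B * P).mulVec ((Ψp xh₀).mulVec δ)) ≤ σ * (L₁ * vecEnorm δ) := by
    have a1 : vecEnorm ((Ψp xh₀).mulVec δ) ≤ L₁ * vecEnorm δ := by
      calc vecEnorm ((Ψp xh₀).mulVec δ) ≤ sigmaMax (Ψp xh₀) * vecEnorm δ := vecEnorm_mulVec_le _ _
        _ ≤ L₁ * vecEnorm δ := mul_le_mul_of_nonneg_right (hL₁ xh₀) hδn
    calc vecEnorm ((B * P).mulVec ((Ψp xh₀).mulVec δ))
        ≤ σ * vecEnorm ((Ψp xh₀).mulVec δ) := vecEnorm_mulVec_le _ _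
      _ ≤ σ * (L₁ * vecEnorm δ) := mul_le_mul_of_nonneg_left a1 hσn
  have t3 : vecEnorm ((Ψf xh₀).mulVec δ) ≤ L₂ * vecEnorm δ := by
    calc vecEnorm ((Ψf xh₀).mulVec δ) ≤ sigmaMax (Ψf xh₀) * vecEnorm δ := vecEnorm_mulVec_le _ _
      _ ≤ L₂ * vecEnorm δ := mul_le_mul_of_nonneg_right (hL₂ xh₀) hδn
  -- combine
  have h4 : σ * (L₁ * vecEnorm δ) ≤ σ * (L₁ * (vecEnorm e / α)) :=
    mul_le_mul_of_nonneg_left (mul_le_mul_of_nonneg_left hδe hL₁n) hσn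
  have h5 : L₂ * vecEnorm δ ≤ L₂ * (vecEnorm e / α) :=
    mul_le_mul_of_nonneg_left hδe hL₂n
  have hfinal : σ * vecEnorm e + σ * (L₁ * (vecEnorm e / α)) + L₂ * (vecEnorm e / α) =
      ((1 + L₁ / α) * σ + L₂ / α) * vecEnorm e := by
    field_simp
  linarith [htri, t1, t2, t3, h4, h5, hfinal.le, hfinal.ge]
end
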